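/- arXiv:1904.10846 — 3 statements merged into one kernel-verified Lean document; each statement's English description precedes it below -/
import Mathlib

section
/- Let F be in the class ℬ with Taylor expansion F(z) = ∑_{k=0}^∞ b_k z^k, and let n ≥ 1 be a natural number. Then for all r with 0 ≤ r ≤ √(n/(n+2)) one has ∑_{k=n+1}^∞ k² |b_k|² r^{2k−2} ≤ ((n+2)^{n+2}/(4 n^n)) · r^{2n}. -/
/-!
The coefficients of `F' = ∑ (k+1) b_{k+1} z^k` satisfy, by Parseval's identity on the circle
`|z| = ρ < 1`, `∑ (k+1)² |b_{k+1}|² ρ^{2k} ≤ max_{|z|=ρ} |F'(z)|² ≤ (1 - ρ²)⁻²`. Comparing `r^{2k}`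
with `(r/ρ)^{2n} ρ^{2k}` for `k ≥ n` bounds the tail by `(r/ρ)^{2n} (1 - ρ²)⁻²`, and the radius
`ρ² = n/(n+2)`, which minimises `ρ^{-2n} (1 - ρ²)^{-2}`, gives the constant `(n+2)^{n+2}/(4nⁿ)`.
-/

open Metric Finset FormalMultilinearSeries Filter Topology
open scoped NNReal ENNReal

section PowerSeries

variable {R : ℝ≥0} {b : ℕ → ℂ} {f : ℂ → ℂ}

lemma le_radius_ofScalars_of_summable
    (hb : ∀ z ∈ ball (0 : ℂ) R, Summable fun k => b k * z ^ k) :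
    (R : ℝ≥0∞) ≤ (ofScalars ℂ b).radius := by
  refine ENNReal.le_of_forall_nnreal_lt fun s hs => (ofScalars ℂ b).le_radius_of_tendsto (l := 0) ?_
  have hsR : (s : ℝ) < R := by exact_mod_cast hs
  simpa [ofScalars_norm] using (hb s (by simpa using hsR)).tendsto_atTop_zero.norm

lemma summable_norm_mul_pow_of_summable
    (hb : ∀ z ∈ ball (0 : ℂ) R, Summable fun k => b k * z ^ k) {s : ℝ} (hs0 : 0 ≤ s) (hs : s < R) :
    Summable fun k => ‖b k‖ * s ^ k := by
  lift s to ℝ≥0 using hs0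
  simpa [ofScalars_norm] using (ofScalars ℂ b).summable_norm_mul_pow
    ((ENNReal.coe_lt_coe.2 hs).trans_le (le_radius_ofScalars_of_summable hb))

lemma hasFPowerSeriesOnBall_ofScalars_of_hasSum (hR : 0 < R)
    (hb : ∀ z ∈ ball (0 : ℂ) R, HasSum (fun k => b k * z ^ k) (f z)) :
    HasFPowerSeriesOnBall f (ofScalars ℂ b) 0 R where
  r_le := le_radius_ofScalars_of_summable fun z hz => (hb z hz).summable
  r_pos := by exact_mod_cast hR
  hasSum {y} hy := by
    simpa [ofScalars_apply_eq, mul_comm] using hb y (by simpa using hy)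

lemma hasSum_deriv_of_hasSum (hR : 0 < R)
    (hb : ∀ z ∈ ball (0 : ℂ) R, HasSum (fun k => b k * z ^ k) (f z)) :
    ∀ z ∈ ball (0 : ℂ) R, HasSum (fun k : ℕ => ((k : ℂ) + 1) * b (k + 1) * z ^ k) (deriv f z) := by
  intro z hz
  have := ((hasFPowerSeriesOnBall_ofScalars_of_hasSum hR hb).fderiv.hasSum (y := z)
    (by simpa using hz)).mapL (ContinuousLinearMap.apply ℂ ℂ 1)
  simpa [apply_eq_pow_smul_coeff, mul_comm] using this

end PowerSeries

lemma sum_range_sq_norm_le_sq_of_norm_le (c : ℕ → ℂ) (N : ℕ) {M : ℝ}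
    (h : ∀ z ∈ sphere (0 : ℂ) 1, ‖∑ k ∈ range N, c k * z ^ k‖ ≤ M) :
    ∑ k ∈ range N, ‖c k‖ ^ 2 ≤ M ^ 2 := by
  set p : Polynomial ℂ := ∑ k ∈ range N, Polynomial.monomial k (c k)
  have hcoeff : ∀ k, p.coeff k = if k < N then c k else 0 := by
    intro k
    simp [p, Polynomial.coeff_monomial]
  have heval : ∀ z, p.eval z = ∑ k ∈ range N, c k * z ^ k := by
    simp [p, Polynomial.eval_finsetSum]
  have hsupp : p.support ⊆ range N := fun k hk => by
    by_contra hN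
    exact Polynomial.mem_support_iff.1 hk (by simp [hcoeff, mem_range.not.1 hN])
  calc ∑ k ∈ range N, ‖c k‖ ^ 2 = ∑ k ∈ p.support, ‖p.coeff k‖ ^ 2 := by
        rw [sum_subset hsupp fun k _ hk => by simp [Polynomial.notMem_support_iff.1 hk]]
        exact sum_congr rfl fun k hk => by simp [hcoeff, mem_range.1 hk]
    _ = Real.circleAverage (fun z => ‖p.eval z‖ ^ 2) 0 1 := p.sum_sq_norm_coeff_eq_circleAverage
    _ ≤ M ^ 2 := Real.circleAverage_mono_on_of_le_circle
        (Continuous.continuousOn (by fun_prop)).circleIntegrable'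
        fun z hz => by
          rw [heval]
          exact pow_le_pow_left₀ (norm_nonneg _) (h z (by simpa using hz)) 2

lemma norm_sum_range_le_of_hasSum {E : Type*} [NormedAddCommGroup E] [CompleteSpace E]
    {f : ℕ → E} {s : E} (hf : HasSum f s) (hf' : Summable fun k => ‖f k‖) (m : ℕ) :
    ‖∑ k ∈ range m, f k‖ ≤ ‖s‖ + ∑' k, ‖f (k + m)‖ := by
  rw [← hf.tsum_eq, ← hf.summable.sum_add_tsum_nat_add m]
  calc ‖∑ k ∈ range m, f k‖
      ≤ ‖∑ k ∈ range m, f k + ∑' k, f (k + m)‖ + ‖∑' k, f (k + m)‖ := norm_le_add_norm_add _ _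
    _ ≤ _ := by
      gcongr
      exact norm_tsum_le_tsum_norm ((summable_nat_add_iff m).2 hf')

lemma sum_range_sq_norm_mul_pow_le_of_norm_le {a : ℕ → ℂ} {g : ℂ → ℂ} {ρ M : ℝ} (hρ : 0 ≤ ρ)
    (hsum : ∀ z ∈ sphere (0 : ℂ) ρ, HasSum (fun k => a k * z ^ k) (g z))
    (hg : ∀ z ∈ sphere (0 : ℂ) ρ, ‖g z‖ ≤ M) (hu : Summable fun k => ‖a k‖ * ρ ^ k) (N : ℕ) :
    ∑ k ∈ range N, ‖a k‖ ^ 2 * ρ ^ (2 * k) ≤ M ^ 2 := by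
  set ε : ℕ → ℝ := fun m => ∑' k, ‖a (k + m)‖ * ρ ^ (k + m)
  have hpartial : ∀ m, ∑ k ∈ range m, ‖a k‖ ^ 2 * ρ ^ (2 * k) ≤ (M + ε m) ^ 2 := by
    intro m
    have hcircle : ∀ w ∈ sphere (0 : ℂ) 1,
        ‖∑ k ∈ range m, a k * (ρ : ℂ) ^ k * w ^ k‖ ≤ M + ε m := by
      intro w hw
      have hz : (ρ : ℂ) * w ∈ sphere (0 : ℂ) ρ := by
        simp_all [abs_of_nonneg hρ]
      have hnorm : ∀ k, ‖a k * ((ρ : ℂ) * w) ^ k‖ = ‖a k‖ * ρ ^ k := fun k => by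
        simp_all [abs_of_nonneg hρ]
      have := norm_sum_range_le_of_hasSum (hsum _ hz) (by simpa only [hnorm] using hu) m
      simp only [hnorm] at this
      simp only [mul_pow, ← mul_assoc] at this
      exact this.trans (by gcongr; exact hg _ hz)
    simpa [mul_pow, ← pow_mul', abs_of_nonneg hρ] using
      sum_range_sq_norm_le_sq_of_norm_le (fun k => a k * (ρ : ℂ) ^ k) m hcircle
  have hlim : Tendsto (fun m => (M + ε m) ^ 2) atTop (𝓝 (M ^ 2)) := by
    simpa using ((tendsto_sum_nat_add fun k => ‖a k‖ * ρ ^ k).const_add M).pow 2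
  refine ge_of_tendsto hlim (eventually_atTop.2 ⟨N, fun m hm => ?_⟩)
  exact (sum_le_sum_of_subset_of_nonneg (range_subset_range.2 hm)
    fun _ _ _ => by positivity).trans (hpartial m)

lemma tsum_sq_norm_mul_pow_tail_le {R : ℝ≥0} {a : ℕ → ℂ} {g : ℂ → ℂ} {ρ r M : ℝ}
    (hsum : ∀ z ∈ ball (0 : ℂ) R, HasSum (fun k => a k * z ^ k) (g z))
    (hρ : 0 < ρ) (hρR : ρ < R) (hr : 0 ≤ r) (hrρ : r ≤ ρ)
    (hg : ∀ z ∈ sphere (0 : ℂ) ρ, ‖g z‖ ≤ M) (n : ℕ) :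
    ∑' k, ‖a (k + n)‖ ^ 2 * r ^ (2 * (k + n)) ≤ (r / ρ) ^ (2 * n) * M ^ 2 := by
  have hu := summable_norm_mul_pow_of_summable (fun z hz => (hsum z hz).summable) hρ.le hρR
  have hsphere : ∀ z ∈ sphere (0 : ℂ) ρ, z ∈ ball (0 : ℂ) R := fun z hz => by
    simpa [mem_sphere_zero_iff_norm.1 hz] using hρR
  have hparseval := sum_range_sq_norm_mul_pow_le_of_norm_le hρ.le
    (fun z hz => hsum z (hsphere z hz)) hg hu
  have hpow : ∀ k, r ^ (2 * (k + n)) ≤ (r / ρ) ^ (2 * n) * ρ ^ (2 * (k + n)) := fun k => by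
    rw [div_pow, mul_add, pow_add, pow_add, div_mul_eq_mul_div, mul_div_assoc,
      mul_div_cancel_right₀ _ (by positivity), mul_comm]
    gcongr
  refine Real.tsum_le_of_sum_range_le (fun _ => by positivity) fun N => ?_
  calc ∑ k ∈ range N, ‖a (k + n)‖ ^ 2 * r ^ (2 * (k + n))
      ≤ ∑ k ∈ range N, (r / ρ) ^ (2 * n) * (‖a (n + k)‖ ^ 2 * ρ ^ (2 * (n + k))) :=
        sum_le_sum fun k _ => by
          rw [add_comm n k, mul_left_comm]
          gcongr
          exact hpow k
    _ ≤ (r / ρ) ^ (2 * n) * ∑ k ∈ range (n + N), ‖a k‖ ^ 2 * ρ ^ (2 * k) := by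
        rw [← mul_sum, sum_range_add]
        gcongr
        exact le_add_of_nonneg_left (sum_nonneg fun _ _ => by positivity)
    _ ≤ (r / ρ) ^ (2 * n) * M ^ 2 := by gcongr; exact hparseval _

theorem bloch_tail_estimate_general
    (F : ℂ → ℂ) (b : ℕ → ℂ)
    (hderiv : ∀ z ∈ ball (0:ℂ) 1, ‖deriv F z‖ ≤ 1 / (1 - ‖z‖ ^ 2))
    (hb : ∀ z ∈ ball (0:ℂ) 1, HasSum (fun k : ℕ => b k * z ^ k) (F z))
    (n : ℕ) (hn : 1 ≤ n)
    (r : ℝ) (hr0 : 0 ≤ r) (hr1 : r ≤ Real.sqrt ((n : ℝ) / (n + 2))) :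
    ∑' k : ℕ, ((k + n + 1 : ℕ) : ℝ) ^ 2 * ‖b (k + n + 1)‖ ^ 2 * r ^ (2 * (k + n + 1) - 2)
      ≤ ((n : ℝ) + 2) ^ (n + 2) / (4 * (n : ℝ) ^ n) * r ^ (2 * n) := by
  set ρ := Real.sqrt ((n : ℝ) / (n + 2))
  have hn0 : (0 : ℝ) < n := by exact_mod_cast hn
  have hρsq : ρ ^ 2 = n / (n + 2) := Real.sq_sqrt (by positivity)
  have hρ0 : 0 < ρ := Real.sqrt_pos.2 (by positivity)
  have hρ1 : ρ < 1 := by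
    rw [Real.sqrt_lt' one_pos, one_pow, div_lt_one (by positivity)]
    linarith
  have hbound : ∀ z ∈ sphere (0 : ℂ) ρ, ‖deriv F z‖ ≤ 1 / (1 - ρ ^ 2) := fun z hz => by
    rw [← mem_sphere_zero_iff_norm.1 hz]
    exact hderiv z (by simpa [mem_sphere_zero_iff_norm.1 hz] using hρ1)
  have htail := tsum_sq_norm_mul_pow_tail_le (R := 1)
    (hasSum_deriv_of_hasSum one_pos (by simpa using hb)) hρ0 (by simpa using hρ1) hr0 hr1 hbound n
  calc ∑' k : ℕ, ((k + n + 1 : ℕ) : ℝ) ^ 2 * ‖b (k + n + 1)‖ ^ 2 * r ^ (2 * (k + n + 1) - 2)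
      = ∑' k : ℕ, ‖(((k + n : ℕ) : ℂ) + 1) * b (k + n + 1)‖ ^ 2 * r ^ (2 * (k + n)) := by
        refine tsum_congr fun k => ?_
        rw [show 2 * (k + n + 1) - 2 = 2 * (k + n) by omega, norm_mul, mul_pow]
        norm_cast
    _ ≤ (r / ρ) ^ (2 * n) * (1 / (1 - ρ ^ 2)) ^ 2 := htail
    _ = ((n : ℝ) + 2) ^ (n + 2) / (4 * (n : ℝ) ^ n) * r ^ (2 * n) := by
        rw [div_pow, pow_mul ρ, hρsq, div_pow]
        field_simp
        ring

theorem bloch_tail_estimate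
    (F : ℂ → ℂ) (b : ℕ → ℂ)
    (hF : DifferentiableOn ℂ F (ball (0:ℂ) 1))
    (hderiv : ∀ z ∈ ball (0:ℂ) 1, ‖deriv F z‖ ≤ 1 / (1 - ‖z‖ ^ 2))
    (hb : ∀ z ∈ ball (0:ℂ) 1, HasSum (fun k : ℕ => b k * z ^ k) (F z))
    (n : ℕ) (hn : 1 ≤ n)
    (r : ℝ) (hr0 : 0 ≤ r) (hr1 : r ≤ Real.sqrt ((n : ℝ) / (n + 2))) :
    ∑' k : ℕ, ((k + n + 1 : ℕ) : ℝ) ^ 2 * ‖b (k + n + 1)‖ ^ 2 * r ^ (2 * (k + n + 1) - 2)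
      ≤ ((n : ℝ) + 2) ^ (n + 2) / (4 * (n : ℝ) ^ n) * r ^ (2 * n) :=
  bloch_tail_estimate_general F b hderiv hb n hn r hr0 hr1
end

section
/- Let F be in the class ℬ with Taylor expansion F(z) = ∑_{k=0}^∞ b_k z^k. Then for every r ∈ (0,1), one has ∑_{k=1}^∞ k |b_k|² r^{2k} ≤ r²/(1−r²). -/
/-!
On the circle `|z| = ρ < 1`, the Taylor coefficients `(k + 1) b_{k+1} ρ^k` of `F'` are the Fourier
coefficients of `θ ↦ F'(ρ e^{iθ})`, so Parseval's identity and the Bloch bound give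
`∑ (k + 1)² |b_{k+1}|² ρ^{2k} ≤ (1 - ρ²)⁻²`. Multiplying by `2ρ` and integrating over `ρ ∈ (0, r)`
turns the left side into `∑ k |b_k|² r^{2k}` and the right side into
`∫₀^r 2ρ / (1 - ρ²)² dρ = r² / (1 - r²)`.
-/

open Complex Finset MeasureTheory Metric Nat

theorem fourierCoeffOn_comp_circleMap {f : ℂ → ℂ} {c : ℂ} {R : ℝ} (hR : 0 < R)
    (hf : DifferentiableOn ℂ f (closedBall c R)) (n : ℕ) :
    fourierCoeffOn Real.two_pi_pos (fun θ => f (circleMap c R θ)) n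
      = (n ! : ℂ)⁻¹ * iteratedDeriv n f c * R ^ n := by
  have hR' : (R : ℂ) ≠ 0 := by exact_mod_cast hR.ne'
  have hcauchy := hf.circleIntegral_one_div_sub_center_pow_smul hR n
  -- along `z = c + R e^{iθ}` one has `dz / (z - c)^(n+1) = i R⁻ⁿ e^{-inθ} dθ`
  have hintegrand : ∀ θ : ℝ, deriv (circleMap c R) θ •
      (1 / (circleMap c R θ - c) ^ (n + 1)) • f (circleMap c R θ)
      = (I * (R : ℂ)⁻¹ ^ n) *
        (fourier (-(n : ℤ)) (θ : AddCircle (2 * Real.pi - 0)) • f (circleMap c R θ)) := by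
    intro θ
    rw [deriv_circleMap, circleMap_sub_center, fourier_coe_apply, circleMap_zero]
    simp only [smul_eq_mul, sub_zero, Int.cast_neg, Int.cast_natCast]
    rw [show 2 * ↑Real.pi * I * -(n : ℂ) * θ / ↑(2 * Real.pi) = -(n * (θ * I)) by
      push_cast; field_simp, Complex.exp_neg, Complex.exp_nat_mul]
    simp only [inv_pow]
    field_simp
    ring
  rw [circleIntegral, intervalIntegral.integral_congr (fun θ _ => hintegrand θ),
    intervalIntegral.integral_const_mul, smul_eq_mul, inv_pow] at hcauchy
  rw [fourierCoeffOn_eq_integral]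
  set J := ∫ θ in (0)..2 * Real.pi,
    fourier (-(n : ℤ)) (θ : AddCircle (2 * Real.pi - 0)) • f (circleMap c R θ)
  field_simp at hcauchy
  rw [Complex.real_smul, hcauchy]
  push_cast [sub_zero]
  field_simp

theorem sum_range_norm_sq_taylorCoeff_mul_pow_le {f : ℂ → ℂ} {c : ℂ} {R M : ℝ} (hR : 0 < R)
    (hf : DifferentiableOn ℂ f (closedBall c R)) (hM : ∀ z ∈ sphere c R, ‖f z‖ ≤ M) (N : ℕ) :
    ∑ n ∈ range N, ‖(n ! : ℂ)⁻¹ * iteratedDeriv n f c‖ ^ 2 * R ^ (2 * n) ≤ M ^ 2 := by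
  have hg : Continuous fun θ => f (circleMap c R θ) :=
    hf.continuousOn.comp_continuous (continuous_circleMap c R)
      fun θ => sphere_subset_closedBall (circleMap_mem_sphere c hR.le θ)
  have hbound : ∀ θ, ‖f (circleMap c R θ)‖ ≤ M := fun θ => hM _ (circleMap_mem_sphere c hR.le θ)
  have hparseval := hasSum_sq_fourierCoeffOn Real.two_pi_pos
    (MemLp.of_bound hg.aestronglyMeasurable M (ae_of_all _ hbound))
  rw [sub_zero, ← Real.circleAverage_def (f := fun z => ‖f z‖ ^ 2)] at hparseval
  calc ∑ n ∈ range N, ‖(n ! : ℂ)⁻¹ * iteratedDeriv n f c‖ ^ 2 * R ^ (2 * n)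
      = ∑ n ∈ range N, ‖fourierCoeffOn Real.two_pi_pos (fun θ => f (circleMap c R θ)) n‖ ^ 2 := by
        simp [fourierCoeffOn_comp_circleMap hR hf, mul_pow, pow_mul', abs_of_pos hR]
    _ ≤ Real.circleAverage (fun z => ‖f z‖ ^ 2) c R := by
        simpa using
          sum_le_hasSum ((range N).map Nat.castEmbedding) (fun _ _ => sq_nonneg _) hparseval
    _ ≤ M ^ 2 := by
        refine Real.circleAverage_mono_on_of_le_circle ?_ fun z hz => ?_
        · exact ((hf.continuousOn.mono sphere_subset_closedBall).norm.pow 2).circleIntegrable hR.le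
        · rw [abs_of_pos hR] at hz
          exact pow_le_pow_left₀ (norm_nonneg _) (hM z hz) 2

theorem iteratedDeriv_eq_factorial_mul_of_hasSum {𝕜 : Type*} [NontriviallyNormedField 𝕜]
    [CompleteSpace 𝕜] [CharZero 𝕜] {F : 𝕜 → 𝕜} {b : ℕ → 𝕜} {R : ℝ} (hR : 0 < R)
    (hb : ∀ z ∈ ball (0 : 𝕜) R, HasSum (fun k => b k * z ^ k) (F z)) (n : ℕ) :
    iteratedDeriv n F 0 = n ! * b n := by
  have hp : HasFPowerSeriesAt F (FormalMultilinearSeries.ofScalars 𝕜 b) 0 := by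
    refine hasFPowerSeriesAt_iff.2 ?_
    filter_upwards [ball_mem_nhds (0 : 𝕜) hR] with z hz
    simpa [mul_comm] using hb z hz
  have hcoeff := congrArg (fun p => FormalMultilinearSeries.coeff p n)
    (hp.eq_formalMultilinearSeries hp.analyticAt.hasFPowerSeriesAt)
  simp only [FormalMultilinearSeries.coeff_ofScalars] at hcoeff
  rw [hcoeff, mul_div_cancel₀ _ (by exact_mod_cast n.factorial_ne_zero)]

theorem one_sub_sq_pos_of_mem_uIcc {r t : ℝ} (hr : |r| < 1) (ht : t ∈ Set.uIcc 0 r) :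
    0 < 1 - t ^ 2 := by
  have htr : |t| ≤ |r| := by simpa using Set.abs_sub_left_of_mem_uIcc ht
  nlinarith [sq_abs t, abs_nonneg t]

theorem continuousOn_two_mul_mul_one_div_one_sub_sq_sq {r : ℝ} (hr : |r| < 1) :
    ContinuousOn (fun ρ : ℝ => 2 * ρ * (1 / (1 - ρ ^ 2)) ^ 2) (Set.uIcc 0 r) :=
  (continuousOn_const.mul continuousOn_id).mul <|
    (continuousOn_const.div (by fun_prop) fun _ ht => (one_sub_sq_pos_of_mem_uIcc hr ht).ne').pow 2

theorem integral_two_mul_mul_one_div_one_sub_sq_sq {r : ℝ} (hr : |r| < 1) :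
    ∫ ρ in (0)..r, 2 * ρ * (1 / (1 - ρ ^ 2)) ^ 2 = r ^ 2 / (1 - r ^ 2) := by
  have hderiv : ∀ t ∈ Set.uIcc 0 r,
      HasDerivAt (fun ρ : ℝ => (1 - ρ ^ 2)⁻¹) (2 * t * (1 / (1 - t ^ 2)) ^ 2) t := by
    intro t ht
    refine (((hasDerivAt_pow 2 t).const_sub 1).inv
      (one_sub_sq_pos_of_mem_uIcc hr ht).ne').congr_deriv ?_
    norm_num
    field_simp
  rw [intervalIntegral.integral_eq_sub_of_hasDerivAt hderiv
    (continuousOn_two_mul_mul_one_div_one_sub_sq_sq hr).intervalIntegrable]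
  have := one_sub_sq_pos_of_mem_uIcc hr Set.right_mem_uIcc
  field_simp
  ring

theorem sum_succ_mul_pow_le_of_sum_succ_sq_mul_pow_le {a : ℕ → ℝ} {N : ℕ} {r : ℝ}
    (hr0 : 0 ≤ r) (hr1 : r < 1)
    (h : ∀ ρ ∈ Set.Ioo 0 r,
      ∑ m ∈ range N, (m + 1) ^ 2 * a m * ρ ^ (2 * m) ≤ (1 / (1 - ρ ^ 2)) ^ 2) :
    ∑ m ∈ range N, (m + 1) * a m * r ^ (2 * m + 2) ≤ r ^ 2 / (1 - r ^ 2) := by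
  have hpoly : Continuous fun ρ : ℝ => 2 * ρ * ∑ m ∈ range N, (m + 1) ^ 2 * a m * ρ ^ (2 * m) := by
    fun_prop
  have hr : |r| < 1 := by rwa [abs_of_nonneg hr0]
  calc ∑ m ∈ range N, (m + 1) * a m * r ^ (2 * m + 2)
      = ∫ ρ in (0)..r, 2 * ρ * ∑ m ∈ range N, (m + 1) ^ 2 * a m * ρ ^ (2 * m) := by
        simp_rw [mul_sum]
        rw [intervalIntegral.integral_finsetSum fun m _ =>
          Continuous.intervalIntegrable (by fun_prop) _ _]
        refine sum_congr rfl fun m _ => ?_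
        have : ∀ ρ : ℝ, 2 * ρ * ((m + 1) ^ 2 * a m * ρ ^ (2 * m))
            = (2 * (m + 1) ^ 2 * a m) * ρ ^ (2 * m + 1) := fun ρ => by ring
        simp_rw [this, intervalIntegral.integral_const_mul, integral_pow]
        push_cast
        field_simp
        ring
    _ ≤ ∫ ρ in (0)..r, 2 * ρ * (1 / (1 - ρ ^ 2)) ^ 2 := by
        refine intervalIntegral.integral_mono_on_of_le_Ioo hr0 (hpoly.intervalIntegrable _ _)
          (continuousOn_two_mul_mul_one_div_one_sub_sq_sq hr).intervalIntegrable
          fun ρ hρ => mul_le_mul_of_nonneg_left (h ρ hρ) (by linarith [hρ.1])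
    _ = r ^ 2 / (1 - r ^ 2) := integral_two_mul_mul_one_div_one_sub_sq_sq hr

theorem sum_succ_sq_mul_norm_sq_coeff_succ_mul_pow_le {F : ℂ → ℂ} {b : ℕ → ℂ}
    (hF : DifferentiableOn ℂ F (ball (0 : ℂ) 1))
    (hderiv : ∀ z ∈ ball (0 : ℂ) 1, ‖deriv F z‖ ≤ 1 / (1 - ‖z‖ ^ 2))
    (hb : ∀ z ∈ ball (0 : ℂ) 1, HasSum (fun k : ℕ => b k * z ^ k) (F z))
    {ρ : ℝ} (hρ0 : 0 < ρ) (hρ1 : ρ < 1) (N : ℕ) :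
    ∑ m ∈ range N, ((m : ℝ) + 1) ^ 2 * ‖b (m + 1)‖ ^ 2 * ρ ^ (2 * m) ≤ (1 / (1 - ρ ^ 2)) ^ 2 := by
  have hF' : DifferentiableOn ℂ (deriv F) (closedBall 0 ρ) :=
    (hF.analyticOnNhd isOpen_ball).deriv.differentiableOn.mono (closedBall_subset_ball hρ1)
  convert sum_range_norm_sq_taylorCoeff_mul_pow_le hρ0 hF' (fun z hz => ?_) N using 3 with m
  · rw [← iteratedDeriv_succ', iteratedDeriv_eq_factorial_mul_of_hasSum one_pos hb,
      factorial_succ, Nat.cast_mul, mul_comm _ (m ! : ℂ), mul_assoc,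
      inv_mul_cancel_left₀ (by exact_mod_cast m.factorial_ne_zero), norm_mul, mul_pow]
    norm_cast
  · rw [mem_sphere_zero_iff_norm] at hz
    simpa [hz] using hderiv z (mem_ball_zero_iff.2 (hz ▸ hρ1))

theorem bloch_area_simple_bound
    (F : ℂ → ℂ) (b : ℕ → ℂ)
    (hF : DifferentiableOn ℂ F (ball (0:ℂ) 1))
    (hderiv : ∀ z ∈ ball (0:ℂ) 1, ‖deriv F z‖ ≤ 1 / (1 - ‖z‖ ^ 2))
    (hb : ∀ z ∈ ball (0:ℂ) 1, HasSum (fun k : ℕ => b k * z ^ k) (F z))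
    (r : ℝ) (hr0 : 0 < r) (hr1 : r < 1) :
    ∑' k : ℕ, (k : ℝ) * ‖b k‖ ^ 2 * r ^ (2 * k) ≤ r ^ 2 / (1 - r ^ 2) := by
  refine Real.tsum_le_of_sum_range_le (fun k => by positivity) fun n => ?_
  calc ∑ k ∈ range n, (k : ℝ) * ‖b k‖ ^ 2 * r ^ (2 * k)
      ≤ ∑ k ∈ range (n + 1), (k : ℝ) * ‖b k‖ ^ 2 * r ^ (2 * k) :=
        sum_le_sum_of_subset_of_nonneg (range_subset_range.2 n.le_succ)
          fun k _ _ => by positivity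
    _ = ∑ m ∈ range n, ((m : ℝ) + 1) * ‖b (m + 1)‖ ^ 2 * r ^ (2 * m + 2) := by
        simp [sum_range_succ', mul_add]
    _ ≤ r ^ 2 / (1 - r ^ 2) :=
        sum_succ_mul_pow_le_of_sum_succ_sq_mul_pow_le hr0.le hr1 fun ρ hρ =>
          sum_succ_sq_mul_norm_sq_coeff_succ_mul_pow_le hF hderiv hb hρ.1 (hρ.2.trans hr1) n
end

section
/- Let a ∈ (0,1) and define H_a(w) = (1 − 4a²/9)² · (−log(1−w) − w) − w²/2 for w ∈ [0,1). Then H_a(w) ≤ 0 for all w ∈ [0, 4a²/9]. -/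
theorem H_a_nonpositive
    (a : ℝ) (ha0 : 0 < a) (ha1 : a < 1)
    (w : ℝ) (hw0 : 0 ≤ w) (hw1 : w ≤ 4 * a ^ 2 / 9) :
    (1 - 4 * a ^ 2 / 9) ^ 2 * (- Real.log (1 - w) - w) - w ^ 2 / 2 ≤ 0 := by
  set c : ℝ := 4 * a ^ 2 / 9 with hc
  have hc0 : 0 < c := by positivity
  have hc49 : c ≤ 4 / 9 := by nlinarith
  have hw1' : w < 1 := lt_of_le_of_lt (hw1.trans hc49) (by norm_num)
  have h1w : 0 < 1 - w := by linarith
  have hlog : -Real.log (1 - w) - w ≤ w ^ 2 / 2 + w ^ 3 / (1 - w) := by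
    have h := Real.abs_log_sub_add_sum_range_le (x := w)
      (by rw [abs_of_nonneg hw0]; exact hw1') 2
    rw [abs_of_nonneg hw0] at h
    have h' := (abs_le.mp h).1
    simp [Finset.sum_range_succ] at h'
    have : (1 : ℝ) + 1 = 2 := by norm_num
    nlinarith [h']
  have hq : w ^ 3 / (1 - w) * (1 - w) = w ^ 3 := div_mul_cancel₀ _ h1w.ne'
  have ht0 : 0 ≤ w ^ 3 / (1 - w) := by positivity
  have hc1 : c ≤ 1 := by linarith
  have key2 : (1 - c) ^ 2 * (w ^ 3 / (1 - w)) ≤ c * (2 - c) * w ^ 2 / 2 := by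
    rw [show (1 - c) ^ 2 * (w ^ 3 / (1 - w)) = (1 - c) ^ 2 * w ^ 3 / (1 - w) from by
      ring, div_le_iff₀ h1w]
    nlinarith [mul_nonneg (sq_nonneg w) (mul_nonneg (mul_nonneg hc0.le hc0.le)
        (by linarith : (0:ℝ) ≤ 1 - c)),
      mul_nonneg (sq_nonneg w) (mul_nonneg (sub_nonneg.2 hw1)
        (mul_nonneg hc0.le (by linarith : (0:ℝ) ≤ 2 - c))),
      mul_nonneg (sq_nonneg w) (mul_nonneg (sub_nonneg.2 hw1) (sq_nonneg (1 - c)))]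
  have e1 : (1 - c) ^ 2 * (w ^ 2 / 2 + w ^ 3 / (1 - w))
      = (1 - c) ^ 2 * (w ^ 2 / 2) + (1 - c) ^ 2 * (w ^ 3 / (1 - w)) := by ring
  have e2 : (1 - c) ^ 2 * (w ^ 2 / 2) + c * (2 - c) * w ^ 2 / 2 = w ^ 2 / 2 := by ring
  have key : (1 - c) ^ 2 * (w ^ 2 / 2 + w ^ 3 / (1 - w)) ≤ w ^ 2 / 2 := by linarith
  have step : (1 - c) ^ 2 * (-Real.log (1 - w) - w)
      ≤ (1 - c) ^ 2 * (w ^ 2 / 2 + w ^ 3 / (1 - w)) :=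
    mul_le_mul_of_nonneg_left hlog (sq_nonneg _)
  linarith
end
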